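/- arXiv:math/0502449 — 3 statements merged into one kernel-verified Lean document; each statement's English description precedes it below -/
import Mathlib

section
/- Let G be a finite group, let A be a G-lattice, and let q be a prime number with gcd(|G|, q) = 1. Assume that for every prime divisor p of |G|, the dimension of the 𝔽_p-vector space (A ⊗ ℤ/pℤ)^G equals the dimension of the 𝔽_q-vector space (A ⊗ ℤ/qℤ)^G. Then H^1(G, A) = {0}. -/
open scoped TensorProduct

/-- The submodule of `G`-fixed points of `ZMod k ⊗[ℤ] A`, where `ZMod k ⊗[ℤ] A` carries the
`G`-action induced (by base change) from the `G`-action `ρ` on `A`. -/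
def fixedTensorSub (G : Type) [Group G] (A : Type) [AddCommGroup A] [Module ℤ A]
    (ρ : Representation ℤ G A) (k : ℕ) : Submodule (ZMod k) (ZMod k ⊗[ℤ] A) where
  carrier := {x | ∀ g : G, LinearMap.baseChange (ZMod k) (ρ g) x = x}
  add_mem' hx hy := fun g => by rw [map_add, hx g, hy g]
  zero_mem' := fun g => by rw [map_zero]
  smul_mem' c x hx := fun g => by rw [map_smul, hx g]

namespace H1TrivAux

variable {G : Type} [Group G] {A : Type} [AddCommGroup A]

/-- The image of a `ℤ`-submodule `N ≤ A` inside `ZMod k ⊗[ℤ] A`. -/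
def imageSub (N : Submodule ℤ A) (k : ℕ) : Submodule (ZMod k) (ZMod k ⊗[ℤ] A) where
  carrier := {x | ∃ a ∈ N, (1 : ZMod k) ⊗ₜ[ℤ] a = x}
  add_mem' := by
    rintro x y ⟨a, ha, rfl⟩ ⟨b, hb, rfl⟩
    exact ⟨a + b, N.add_mem ha hb, TensorProduct.tmul_add _ a b⟩
  zero_mem' := ⟨0, N.zero_mem, TensorProduct.tmul_zero _ _⟩
  smul_mem' := by
    rintro c x ⟨a, ha, rfl⟩
    obtain ⟨m, rfl⟩ := ZMod.intCast_surjective c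
    refine ⟨m • a, N.smul_mem m ha, ?_⟩
    rw [TensorProduct.tmul_smul, Int.cast_smul_eq_zsmul]

section Free

variable [Module.Free ℤ A] [Module.Finite ℤ A]

lemma smul_cancel {k : ℤ} (hk : k ≠ 0) {x y : A} (h : k • x = k • y) : x = y :=
  smul_right_injective A hk h

lemma exists_of_tmul_eq_zero {k : ℕ} {x : A} (h : (1 : ZMod k) ⊗ₜ[ℤ] x = 0) :
    ∃ y : A, x = (k : ℤ) • y := by
  classical
  set b := Module.Free.chooseBasis ℤ A with hbdef
  have hdvd : ∀ i, ((k : ℕ) : ℤ) ∣ b.repr x i := by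
    intro i
    have h1 := Module.Basis.baseChange_repr_tmul (ZMod k) b (1 : ZMod k) x i
    rw [h, map_zero, Finsupp.zero_apply] at h1
    have h2 : ((b.repr x i : ℤ) : ZMod k) = 0 := by
      rw [← zsmul_one (b.repr x i : ℤ)]; exact h1.symm
    exact (ZMod.intCast_zmod_eq_zero_iff_dvd _ k).mp h2
  refine ⟨∑ i, (b.repr x i / (k : ℤ)) • b i, ?_⟩
  rw [Finset.smul_sum]
  have heach : ∀ i ∈ Finset.univ, (k : ℤ) • ((b.repr x i / (k : ℤ)) • b i)
      = b.repr x i • b i := by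
    intro i _
    rw [smul_smul, Int.mul_ediv_cancel' (hdvd i)]
  rw [Finset.sum_congr rfl heach, Module.Basis.sum_repr]

lemma subFree (N : Submodule ℤ A) : Module.Free ℤ N := inferInstance

omit [Module.Free ℤ A] in
lemma subFinite (N : Submodule ℤ A) : Module.Finite ℤ N := by
  haveI : IsNoetherian ℤ A := isNoetherian_of_isNoetherianRing_of_finite ℤ A
  exact Module.Finite.iff_fg.mpr (IsNoetherian.noetherian N)

/-- The `𝔽_ℓ`-dimension of the image of `N` in `ZMod ℓ ⊗ A` is independent of the prime `ℓ`,
provided `N` is divisibly closed in `A`. -/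
lemma exists_finrank_imageSub (N : Submodule ℤ A)
    (hdiv : ∀ (y : A) (k : ℕ), k.Prime → (k : ℤ) • y ∈ N → y ∈ N) :
    ∃ n : ℕ, ∀ ℓ : ℕ, ℓ.Prime →
      Module.finrank (ZMod ℓ) (imageSub N ℓ) = n := by
  classical
  haveI hfin : Module.Finite ℤ N := subFinite N
  set ι := Module.Free.ChooseBasisIndex ℤ ↥N with hι
  haveI : Fintype ι := Module.Free.ChooseBasisIndex.fintype ℤ ↥N
  set c := Module.Free.chooseBasis ℤ ↥N with hc
  refine ⟨Fintype.card ι, fun ℓ hℓ => ?_⟩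
  haveI : Fact ℓ.Prime := ⟨hℓ⟩
  haveI : NeZero ℓ := ⟨hℓ.ne_zero⟩
  set ψ : (ι → ZMod ℓ) →ₗ[ZMod ℓ] (ZMod ℓ ⊗[ℤ] A) :=
    { toFun := fun v => ∑ i, v i • ((1 : ZMod ℓ) ⊗ₜ[ℤ] (c i : A))
      map_add' := by
        intro v w
        simp [add_smul, Finset.sum_add_distrib]
      map_smul' := by
        intro r v
        simp [smul_smul, Finset.smul_sum] } with hψ
  have hψ_apply : ∀ v, ψ v = ∑ i, v i • ((1 : ZMod ℓ) ⊗ₜ[ℤ] (c i : A)) := fun v => rfl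
  have key : ∀ m : ι → ℤ, (∑ i, ((m i : ZMod ℓ)) • ((1 : ZMod ℓ) ⊗ₜ[ℤ] (c i : A)))
      = (1 : ZMod ℓ) ⊗ₜ[ℤ] (((∑ i, m i • c i : N) : A)) := by
    intro m
    rw [Submodule.coe_sum, TensorProduct.tmul_sum]
    refine Finset.sum_congr rfl fun i _ => ?_
    rw [Submodule.coe_smul, TensorProduct.tmul_smul, Int.cast_smul_eq_zsmul]
  have hinj : Function.Injective ψ := by
    rw [← LinearMap.ker_eq_bot, eq_bot_iff]
    intro v hv
    simp only [LinearMap.mem_ker] at hv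
    set m : ι → ℤ := fun i => ((v i).val : ℤ) with hm
    have hvm : ∀ i, ((m i : ZMod ℓ)) = v i := by
      intro i
      simp only [hm, Int.cast_natCast]
      exact ZMod.natCast_rightInverse (v i)
    have h0 : (1 : ZMod ℓ) ⊗ₜ[ℤ] (((∑ i, m i • c i : N) : A)) = 0 := by
      rw [← key m, ← hv, hψ_apply]
      exact Finset.sum_congr rfl fun i _ => by rw [hvm i]
    obtain ⟨y, hy⟩ := exists_of_tmul_eq_zero h0
    have hyN : y ∈ N := hdiv y ℓ hℓ (hy ▸ (∑ i, m i • c i : N).2)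
    have hxy : (∑ i, m i • c i : N) = (ℓ : ℤ) • (⟨y, hyN⟩ : N) := by
      apply Subtype.ext
      rw [Submodule.coe_smul]
      exact hy
    have hrepr : ∀ i, m i = (ℓ : ℤ) * (c.repr ⟨y, hyN⟩ i) := by
      intro i
      have hL := congrFun (Module.Basis.repr_sum_self c m) i
      rw [hxy, map_smul, Finsupp.smul_apply, smul_eq_mul] at hL
      exact hL.symm
    have hzero : ∀ i, v i = 0 := by
      intro i
      rw [← hvm i, hrepr i]
      push_cast
      simp [ZMod.natCast_self]
    rw [Submodule.mem_bot]
    funext i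
    exact hzero i
  have hrange : LinearMap.range ψ = imageSub N ℓ := by
    apply le_antisymm
    · rintro x ⟨v, rfl⟩
      rw [hψ_apply]
      apply Submodule.sum_mem
      intro i _
      exact Submodule.smul_mem _ _ ⟨(c i : A), (c i).2, rfl⟩
    · rintro x ⟨a, ha, rfl⟩
      set a' : N := ⟨a, ha⟩ with ha'
      refine ⟨fun i => ((c.repr a' i : ℤ) : ZMod ℓ), ?_⟩
      rw [hψ_apply, key]
      congr 1
      exact congrArg _ (Module.Basis.sum_repr c a')
  calc Module.finrank (ZMod ℓ) (imageSub N ℓ)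
      = Module.finrank (ZMod ℓ) (LinearMap.range ψ) := by rw [hrange]
    _ = Module.finrank (ZMod ℓ) (ι → ZMod ℓ) := LinearMap.finrank_range_of_inj hinj
    _ = Fintype.card ι := Module.finrank_fintype_fun_eq_card _

end Free

end H1TrivAux

namespace H1TrivAux

variable {G : Type} [Group G] {A : Type} [AddCommGroup A]


lemma imageSub_le_fixed (ρ : Representation ℤ G A) (k : ℕ) :
    imageSub ρ.invariants k ≤ fixedTensorSub G A ρ k := by
  rintro x ⟨a, ha, rfl⟩ g
  rw [LinearMap.baseChange_tmul, (Representation.mem_invariants ρ a).mp ha g]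

lemma sum_apply_mem_invariants [Fintype G] (ρ : Representation ℤ G A) (a : A) :
    (∑ g : G, ρ g a) ∈ ρ.invariants := by
  rw [Representation.mem_invariants]
  intro g
  rw [map_sum]
  have h1 : ∀ h : G, ρ g (ρ h a) = ρ (g * h) a := by
    intro h; rw [map_mul]; rfl
  rw [Finset.sum_congr rfl fun h _ => h1 h]
  exact Fintype.sum_equiv (Equiv.mulLeft g) _ _ fun h => rfl

lemma imageSub_eq_fixed_of_coprime [Fintype G] (ρ : Representation ℤ G A) {k : ℕ}
    (hc : Nat.Coprime (Nat.card G) k) :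
    imageSub ρ.invariants k = fixedTensorSub G A ρ k := by
  refine le_antisymm (imageSub_le_fixed ρ k) ?_
  intro x hx
  have key : ∀ y : ZMod k ⊗[ℤ] A,
      (∑ g : G, LinearMap.baseChange (ZMod k) (ρ g) y) ∈ imageSub ρ.invariants k := by
    intro y
    induction y using TensorProduct.induction_on with
    | zero => simp
    | tmul cc a =>
        have h1 : (∑ g : G, LinearMap.baseChange (ZMod k) (ρ g) (cc ⊗ₜ[ℤ] a))
            = cc ⊗ₜ[ℤ] (∑ g : G, ρ g a) := by
          rw [TensorProduct.tmul_sum]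
          exact Finset.sum_congr rfl fun g _ => LinearMap.baseChange_tmul _ _ _
        rw [h1]
        have h2 : cc ⊗ₜ[ℤ] (∑ g : G, ρ g a)
            = cc • ((1 : ZMod k) ⊗ₜ[ℤ] (∑ g : G, ρ g a)) := by
          rw [TensorProduct.smul_tmul', smul_eq_mul, mul_one]
        rw [h2]
        exact Submodule.smul_mem _ _ ⟨_, sum_apply_mem_invariants ρ a, rfl⟩
    | add y z hy hz =>
        have h3 : (∑ g : G, LinearMap.baseChange (ZMod k) (ρ g) (y + z))
            = (∑ g : G, LinearMap.baseChange (ZMod k) (ρ g) y)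
              + (∑ g : G, LinearMap.baseChange (ZMod k) (ρ g) z) := by
          rw [← Finset.sum_add_distrib]
          exact Finset.sum_congr rfl fun g _ => map_add _ y z
        rw [h3]
        exact Submodule.add_mem _ hy hz
  have hsum : (∑ g : G, LinearMap.baseChange (ZMod k) (ρ g) x)
      = ((Nat.card G : ℕ) : ZMod k) • x := by
    rw [Finset.sum_congr rfl fun g _ => hx g, Finset.sum_const, Finset.card_univ,
      Nat.card_eq_fintype_card, Nat.cast_smul_eq_nsmul]
  set u : (ZMod k)ˣ := ZMod.unitOfCoprime (Nat.card G) hc with hu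
  have hx2 : x = (↑u⁻¹ : ZMod k) • (∑ g : G, LinearMap.baseChange (ZMod k) (ρ g) x) := by
    rw [hsum, ← ZMod.coe_unitOfCoprime (Nat.card G) hc, ← hu, smul_smul, Units.inv_mul, one_smul]
  rw [hx2]
  exact Submodule.smul_mem _ _ (key x)

end H1TrivAux

namespace H1TrivAux

open groupCohomology

variable {G : Type} [Group G] {A : Type} [AddCommGroup A]

lemma cocycle_norm [Fintype G] (ρ : Representation ℤ G A)
    (f : cocycles₁ (Rep.of ρ)) :
    ∃ a : A, ∀ g : G, (Fintype.card G : ℤ) • (f g : A) = ρ g a - a := by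
  set F : G → A := fun g => f g with hF
  have hco : ∀ g h : G, F (g * h) = ρ g (F h) + F g :=
    fun g h => (mem_cocycles₁_iff (A := Rep.of ρ) (f : G → A)).1 f.2 g h
  refine ⟨-(∑ h : G, F h), fun g => ?_⟩
  have hre : (∑ h : G, F (g * h)) = ∑ h : G, F h :=
    Fintype.sum_equiv (Equiv.mulLeft g) _ _ fun h => rfl
  have key : (∑ h : G, F h) = ρ g (∑ h : G, F h) + Fintype.card G • F g :=
    calc (∑ h : G, F h) = ∑ h : G, F (g * h) := hre.symm
      _ = ∑ h : G, (ρ g (F h) + F g) := Finset.sum_congr rfl fun h _ => hco g h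
      _ = ρ g (∑ h : G, F h) + Fintype.card G • F g := by
          rw [Finset.sum_add_distrib, ← map_sum, Finset.sum_const, Finset.card_univ]
  calc (Fintype.card G : ℤ) • F g
      = Fintype.card G • F g := natCast_zsmul _ _
    _ = (∑ h : G, F h) - ρ g (∑ h : G, F h) := (sub_eq_of_eq_add' key).symm
    _ = ρ g (-(∑ h : G, F h)) - (-(∑ h : G, F h)) := by rw [map_neg]; abel

end H1TrivAux

namespace H1TrivAux

open groupCohomology

variable {G : Type} [Group G] {A : Type} [AddCommGroup A]

lemma cocycle_div [Module.Free ℤ A] [Module.Finite ℤ A] (ρ : Representation ℤ G A)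
    (p : ℕ) (hp : p.Prime)
    (hfix : imageSub ρ.invariants p = fixedTensorSub G A ρ p)
    (f : cocycles₁ (Rep.of ρ)) (a : A)
    (hfa : ∀ g : G, (p : ℤ) • (f g : A) = ρ g a - a) :
    ∃ c : A, ∀ g : G, (f g : A) = ρ g c - c := by
  set F : G → A := fun g => f g with hF
  have hp0 : ((p : ℕ) : ℤ) ≠ 0 := Int.natCast_ne_zero.mpr hp.ne_zero
  have habar : ((1 : ZMod p) ⊗ₜ[ℤ] a) ∈ fixedTensorSub G A ρ p := by
    intro g
    rw [LinearMap.baseChange_tmul]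
    have h1 : ρ g a = a + (p : ℤ) • F g := by rw [hfa g]; abel
    have h2 : (1 : ZMod p) ⊗ₜ[ℤ] ((p : ℤ) • F g) = (0 : ZMod p ⊗[ℤ] A) := by
      rw [TensorProduct.tmul_smul, ← Int.cast_smul_eq_zsmul (ZMod p)]
      push_cast
      rw [ZMod.natCast_self, zero_smul]
    rw [h1, TensorProduct.tmul_add, h2, add_zero]
  rw [← hfix] at habar
  obtain ⟨b, hbN, hba⟩ := habar
  have h0 : (1 : ZMod p) ⊗ₜ[ℤ] (a - b) = 0 := by
    rw [TensorProduct.tmul_sub, hba, sub_self]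
  obtain ⟨y, hy⟩ := exists_of_tmul_eq_zero h0
  refine ⟨y, fun g => ?_⟩
  have hb : ρ g b = b := (Representation.mem_invariants ρ b).mp hbN g
  have ha : a = b + (p : ℤ) • y := by rw [← hy]; abel
  have hkey : (p : ℤ) • F g = (p : ℤ) • (ρ g y - y) := by
    rw [hfa g, ha, map_add, hb, map_smul, smul_sub]
    abel
  exact smul_cancel (A := A) hp0 hkey

end H1TrivAux

/-- Let `G` be a finite group, `A` a `G`-lattice and `q` a prime with `gcd(|G|, q) = 1`.
If for every prime divisor `p` of `|G|` one has
`dim_{𝔽_p} (A ⊗ ℤ/pℤ)^G = dim_{𝔽_q} (A ⊗ ℤ/qℤ)^G`, then `H¹(G, A) = 0`. -/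
theorem H1_trivial_of_fixed_dims_eq
    (G : Type) [Group G] [Finite G]
    (A : Type) [AddCommGroup A] [Module ℤ A] [Module.Free ℤ A] [Module.Finite ℤ A]
    (ρ : Representation ℤ G A)
    (q : ℕ) (hq : q.Prime) (hqG : Nat.gcd (Nat.card G) q = 1)
    (hdim : ∀ p : ℕ, p.Prime → p ∣ Nat.card G →
      Module.finrank (ZMod p) (fixedTensorSub G A ρ p) =
        Module.finrank (ZMod q) (fixedTensorSub G A ρ q)) :
    Subsingleton (groupCohomology.H1 (Rep.of ρ)) := by
  haveI : Unique (Module ℤ A) := AddCommGroup.uniqueIntModule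
  have heq : ‹Module ℤ A› = AddCommGroup.toIntModule A := Subsingleton.elim _ _
  subst heq
  haveI : Fintype G := Fintype.ofFinite G
  classical
  set N := ρ.invariants with hN
  have hdiv : ∀ (y : A) (k : ℕ), k.Prime → (k : ℤ) • y ∈ N → y ∈ N := by
    intro y k hk hky
    rw [Representation.mem_invariants]
    intro g
    have h1 : ρ g ((k : ℤ) • y) = (k : ℤ) • y := (Representation.mem_invariants ρ _).mp hky g
    rw [map_smul] at h1
    exact H1TrivAux.smul_cancel (A := A) (Int.natCast_ne_zero.mpr hk.ne_zero) h1
  obtain ⟨n, hn⟩ := H1TrivAux.exists_finrank_imageSub N hdiv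
  have hfixq : H1TrivAux.imageSub N q = fixedTensorSub G A ρ q :=
    H1TrivAux.imageSub_eq_fixed_of_coprime ρ hqG
  have hfixp : ∀ p : ℕ, p.Prime → p ∣ Nat.card G →
      H1TrivAux.imageSub N p = fixedTensorSub G A ρ p := by
    intro p hp hpd
    haveI : Fact p.Prime := ⟨hp⟩
    haveI : Module.Finite (ZMod p) (ZMod p ⊗[ℤ] A) := Module.Finite.base_change ℤ (ZMod p) A
    refine Submodule.eq_of_le_of_finrank_le (H1TrivAux.imageSub_le_fixed ρ p) ?_
    refine le_of_eq ?_
    calc Module.finrank (ZMod p) ↥(fixedTensorSub G A ρ p)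
        = Module.finrank (ZMod q) ↥(fixedTensorSub G A ρ q) := hdim p hp hpd
      _ = Module.finrank (ZMod q) ↥(H1TrivAux.imageSub N q) := by rw [hfixq]
      _ = n := hn q hq
      _ = Module.finrank (ZMod p) ↥(H1TrivAux.imageSub N p) := (hn p hp).symm
  have main : ∀ k : ℕ, k ∣ Nat.card G →
      ∀ (f : groupCohomology.cocycles₁ (Rep.of ρ)) (a : A),
      (∀ g : G, (k : ℤ) • (f g : A) = ρ g a - a) →
      ∃ c : A, ∀ g : G, (f g : A) = ρ g c - c := by
    intro k
    induction k using Nat.strong_induction_on with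
    | _ k ih =>
      intro hkdvd f a hfa
      rcases eq_or_ne k 1 with rfl | hk1
      · refine ⟨a, fun g => ?_⟩
        have h2 := hfa g
        rwa [Nat.cast_one, one_smul] at h2
      · have hk0 : k ≠ 0 := by
          rintro rfl
          rw [zero_dvd_iff] at hkdvd
          exact (Nat.card_pos).ne' hkdvd
        obtain ⟨p, hp, hpk⟩ := Nat.exists_prime_and_dvd hk1
        obtain ⟨m, rfl⟩ := hpk
        have hm0 : m ≠ 0 := by rintro rfl; simp at hk0
        have hmlt : m < p * m :=
          (Nat.lt_mul_iff_one_lt_left (Nat.pos_of_ne_zero hm0)).mpr hp.one_lt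
        set f' := ((m : ℤ) • f : groupCohomology.cocycles₁ (Rep.of ρ)) with hf'
        have hf'app : ∀ g : G, (f' g : A) = (m : ℤ) • (f g : A) := fun g => rfl
        have h1 : ∀ g : G, (p : ℤ) • (f' g : A) = ρ g a - a := by
          intro g
          rw [hf'app g, smul_smul]
          have hcast : ((p : ℤ)) * ((m : ℤ)) = ((p * m : ℕ) : ℤ) := by push_cast; ring
          rw [hcast]
          exact hfa g
        obtain ⟨c, hc⟩ := H1TrivAux.cocycle_div ρ p hp
          (hfixp p hp (dvd_trans (Dvd.intro m rfl) hkdvd)) f' a h1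
        refine ih m hmlt (dvd_trans (Dvd.intro_left p rfl) hkdvd) f c ?_
        intro g
        rw [← hf'app g]
        exact hc g
  refine subsingleton_of_forall_eq 0 fun x => ?_
  refine groupCohomology.H1_induction_on x fun f => ?_
  rw [groupCohomology.H1π_eq_zero_iff]
  obtain ⟨a, ha⟩ := H1TrivAux.cocycle_norm ρ f
  obtain ⟨c, hc⟩ := main (Nat.card G) dvd_rfl f a
    (by intro g; rw [Nat.card_eq_fintype_card]; exact ha g)
  exact ⟨c, funext fun g => (hc g).symm⟩
end

section
/- Let G be a cyclic group of finite order k with generator g₀, acting on a G-lattice A. Then the first group cohomology H^1(G, A) is isomorphic, as an abelian group, to the torsion subgroup Tors(A_G) of the coinvariants A_G = A / im(g₀ − id), where g₀ − id : A → A is the group endomorphism x ↦ g₀·x − x. -/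
open groupCohomology

/-- Let `G` be a cyclic group of finite order `k` with generator `g₀`, acting on a `G`-lattice
`A`.  Then `H¹(G, A)` is isomorphic, as an abelian group, to the torsion subgroup of the
coinvariants `A_G = A / im(g₀ - id)`. -/
theorem H1_addEquiv_torsion_coinvariants
    (G : Type) [Group G] (k : ℕ) (hk : 0 < k) (hcard : Nat.card G = k)
    (g₀ : G) (hg₀ : ∀ x : G, x ∈ Subgroup.zpowers g₀)
    (A : Type) [AddCommGroup A] [Module ℤ A] [Module.Free ℤ A] [Module.Finite ℤ A]
    (ρ : Representation ℤ G A) :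
    Nonempty (groupCohomology.H1 (Rep.of ρ) ≃+
      Submodule.torsion ℤ (A ⧸ LinearMap.range (ρ g₀ - LinearMap.id))) := by
  classical
  have hfinG : Finite G := Nat.finite_of_card_ne_zero (by omega)
  have hzp : Subgroup.zpowers g₀ = ⊤ := by
    rw [Subgroup.eq_top_iff']; exact hg₀
  have horder : orderOf g₀ = k := by
    rw [← Nat.card_zpowers, hzp, ← hcard]
    exact Nat.card_congr Subgroup.topEquiv.toEquiv
  have hg₀k : g₀ ^ k = 1 := by rw [← horder]; exact pow_orderOf_eq_one g₀
  set R : A →ₗ[ℤ] A := ρ g₀ with hRdef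
  have hRk : R ^ k = 1 := by
    rw [hRdef, ← map_pow, hg₀k, map_one]
  set N : A →ₗ[ℤ] A := ∑ i ∈ Finset.range k, R ^ i with hNdef
  have hRid : ρ g₀ - LinearMap.id = R - 1 := rfl
  have hNR : N * (R - 1) = 0 := by rw [hNdef, geom_sum_mul, hRk, sub_self]
  set J : Submodule ℤ A := LinearMap.range (ρ g₀ - LinearMap.id) with hJdef
  have hJmem : ∀ y : A, R y - y ∈ J := fun y => ⟨y, rfl⟩
  -- partial sums
  set S : A → ℕ → A := fun x n => ∑ j ∈ Finset.range n, (R ^ j) x with hSdef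
  have hS_succ : ∀ x n, S x (n + 1) = S x n + (R ^ n) x := by
    intro x n; simp [hSdef, Finset.sum_range_succ]
  have hS_zero : ∀ x, S x 0 = 0 := by intro x; simp [hSdef]
  have hS_one : ∀ x, S x 1 = x := by intro x; simp [hSdef]
  have hS_k : ∀ x, S x k = N x := by
    intro x; simp [hSdef, hNdef, LinearMap.sum_apply]
  have hS_add : ∀ x n m, S x (n + m) = S x n + (R ^ n) (S x m) := by
    intro x n m
    induction m with
    | zero => simp [hSdef]
    | succ m ih =>
      rw [← Nat.add_assoc, hS_succ, ih, hS_succ, map_add, add_assoc]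
      congr 1
      rw [← Module.End.mul_apply, ← pow_add]
  have hS_mod : ∀ x, N x = 0 → ∀ n, S x n = S x (n % k) := by
    intro x hx n
    conv_lhs => rw [← Nat.mod_add_div n k]
    generalize n / k = t
    induction t with
    | zero => simp
    | succ t ih =>
      have h1 : n % k + k * (t + 1) = (n % k + k * t) + k := by ring
      rw [h1, hS_add, hS_k, hx, map_zero, add_zero, ih]
  have hSkey : ∀ x, N x = 0 → ∀ a b : ℕ, g₀ ^ a = g₀ ^ b → S x a = S x b := by
    intro x hx a b hab
    have h2 : a ≡ b [MOD k] := by rw [← horder]; exact pow_eq_pow_iff_modEq.1 hab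
    rw [hS_mod x hx a, hS_mod x hx b, h2]
  -- exponents
  have hex : ∀ g : G, ∃ n : ℕ, g₀ ^ n = g := by
    intro g
    exact (Submonoid.mem_powers_iff g g₀).1 (mem_powers_iff_mem_zpowers.2 (hg₀ g))
  set e : G → ℕ := fun g => (hex g).choose with hedef
  have he : ∀ g, g₀ ^ e g = g := fun g => (hex g).choose_spec
  have hρg : ∀ g : G, ρ g = R ^ e g := by
    intro g
    conv_lhs => rw [← he g]
    rw [map_pow, hRdef]
  -- telescoping
  have hS_sub : ∀ (y : A) (n : ℕ), S (R y - y) n = (R ^ n) y - y := by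
    intro y n
    induction n with
    | zero => simp [hSdef]
    | succ n ih =>
      have hp : (R ^ (n + 1)) y = (R ^ n) (R y) := by rw [pow_succ]; rfl
      rw [hS_succ, ih, map_sub, hp]
      abel
  have hRS : ∀ (x : A) (i : ℕ), R (S x i) = S x (i + 1) - x := by
    intro x i
    induction i with
    | zero => simp [hSdef]
    | succ i ih =>
      have hp : (R ^ (i + 1)) x = R ((R ^ i) x) := by rw [pow_succ']; rfl
      rw [hS_succ, map_add, ih, ← hp, show S x (i + 1 + 1) = S x (i + 1) + (R ^ (i + 1)) x
        from hS_succ x (i + 1)]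
      abel
  -- k • x ∈ J when N x = 0  (nsmul version)
  have hkx : ∀ x : A, N x = 0 → k • x ∈ J := by
    intro x hx
    have key : (R - 1) (∑ i ∈ Finset.range k, S x i) = N x - k • x := by
      rw [map_sum]
      have h1 : ∀ i ∈ Finset.range k, (R - 1) (S x i) = (S x (i + 1) - S x i) - x := by
        intro i _
        rw [LinearMap.sub_apply, Module.End.one_apply, hRS]
        abel
      rw [Finset.sum_congr rfl h1, Finset.sum_sub_distrib, Finset.sum_range_sub (S x),
        Finset.sum_const, Finset.card_range, hS_zero, hS_k, sub_zero]
    refine ⟨-(∑ i ∈ Finset.range k, S x i), ?_⟩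
    rw [hRid, map_neg, key, hx, zero_sub, neg_neg]
  -- torsion-freeness of A for zsmul
  have hzfree : ∀ (z : ℤ) (b : A), z • b = 0 → z = 0 ∨ b = 0 := by
    intro z b hzb
    have h5 := @Int.cast_smul_eq_zsmul ℤ A _ _ ‹Module ℤ A› z b
    rw [Int.cast_id] at h5
    rw [← h5] at hzb
    exact smul_eq_zero.1 hzb
  -- coerce cocycles into `A`-world
  set v : cocycles₁ (Rep.of ρ) → G → A := fun f => f.1 with hvdef
  -- cocycle values are partial sums
  have hcpow : ∀ f : cocycles₁ (Rep.of ρ), ∀ n : ℕ, v f (g₀ ^ n) = S (v f g₀) n := by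
    intro f n
    induction n with
    | zero =>
      rw [pow_zero, hS_zero]
      exact cocycles₁_map_one f
    | succ n ih =>
      have h2v : v f (g₀ ^ n * g₀) = ρ (g₀ ^ n) (v f g₀) + v f (g₀ ^ n) :=
        (mem_cocycles₁_iff (A := Rep.of ρ) (v f)).1 f.2 (g₀ ^ n) g₀
      rw [pow_succ, h2v, ih, hS_succ, map_pow, ← hRdef]
      exact add_comm _ _
  have hNf : ∀ f : cocycles₁ (Rep.of ρ), N (v f g₀) = 0 := by
    intro f
    have h1 : v f (g₀ ^ k) = S (v f g₀) k := hcpow f k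
    rw [hg₀k, hS_k] at h1
    have h0 : v f (1 : G) = 0 := cocycles₁_map_one f
    rw [h0] at h1
    exact h1.symm
  -- smul compatibilities on the quotient
  have hmks : ∀ (n : ℕ) (y : A),
      n • (Submodule.Quotient.mk y : A ⧸ J) = Submodule.Quotient.mk (n • y) := by
    intro n y
    induction n with
    | zero => simp
    | succ n ih => rw [succ_nsmul, succ_nsmul, ih, Submodule.Quotient.mk_add]
  have hzmk : ∀ (z : ℤ) (y : A),
      z • (Submodule.Quotient.mk y : A ⧸ J) = Submodule.Quotient.mk (z • y) := by
    intro z y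
    induction z using Int.induction_on with
    | zero => rw [zero_zsmul, zero_zsmul, Submodule.Quotient.mk_zero]
    | succ n ih => rw [add_zsmul, add_zsmul, one_zsmul, one_zsmul, ih, Submodule.Quotient.mk_add]
    | pred n ih =>
      rw [sub_zsmul, sub_zsmul, one_zsmul, one_zsmul, ih, Submodule.Quotient.mk_add,
        Submodule.Quotient.mk_neg]
  have hknz : (k : ℤ) ∈ nonZeroDivisors ℤ :=
    mem_nonZeroDivisors_of_ne_zero (Int.natCast_ne_zero.2 (by omega))
  -- the map on cocycles
  have htor : ∀ f : cocycles₁ (Rep.of ρ),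
      (Submodule.Quotient.mk (v f g₀) : A ⧸ J) ∈ Submodule.torsion ℤ (A ⧸ J) := by
    intro f
    rw [Submodule.mem_torsion_iff]
    refine ⟨⟨(k : ℤ), hknz⟩, ?_⟩
    have hz : (k : ℤ) • (Submodule.Quotient.mk (v f g₀) : A ⧸ J) = 0 := by
      rw [natCast_zsmul, hmks, Submodule.Quotient.mk_eq_zero]
      exact hkx _ (hNf f)
    rw [Submonoid.mk_smul]
    exact hz
  let T := Submodule.torsion ℤ (A ⧸ J)
  let Ψ : cocycles₁ (Rep.of ρ) → T := fun f => ⟨Submodule.Quotient.mk (v f g₀), htor f⟩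
  have hΨval : ∀ f : cocycles₁ (Rep.of ρ),
      (Ψ f : A ⧸ J) = Submodule.Quotient.mk (v f g₀) := fun f => rfl
  -- quotient map onto H1, with explicit instances
  let mkH : cocycles₁ (Rep.of ρ) → H1 (Rep.of ρ) :=
    fun f => H1π (Rep.of ρ) f
  have mkH_surj : ∀ c : H1 (Rep.of ρ), ∃ f, mkH f = c := fun c =>
    (ModuleCat.epi_iff_surjective (H1π (Rep.of ρ))).1 inferInstance c
  have mkH_add : ∀ a b : cocycles₁ (Rep.of ρ), mkH a + mkH b = mkH (a + b) :=
    fun a b => (map_add _ a b).symm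
  have mkH_eq : ∀ a b : cocycles₁ (Rep.of ρ),
      mkH a = mkH b ↔ ⇑a - ⇑b ∈ coboundaries₁ (Rep.of ρ) := fun a b =>
    H1π_eq_iff a b
  -- the map descends
  have hdiff : ∀ a b : cocycles₁ (Rep.of ρ), ⇑a - ⇑b ∈ coboundaries₁ (Rep.of ρ) →
      Ψ a = Ψ b := by
    intro a b hab
    obtain ⟨x, hx⟩ := hab
    have hx0 : v a g₀ - v b g₀ ∈ J := by
      refine ⟨x, ?_⟩
      have hx' := congrFun hx g₀
      rw [d₀₁_hom_apply] at hx'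
      exact hx'
    apply Subtype.ext
    show (Submodule.Quotient.mk (v a g₀) : A ⧸ J) = Submodule.Quotient.mk (v b g₀)
    rw [Submodule.Quotient.eq]
    exact hx0
  let Φ : H1 (Rep.of ρ) → T := fun c => Ψ (mkH_surj c).choose
  have hΦmk : ∀ f : cocycles₁ (Rep.of ρ), Φ (mkH f) = Ψ f := fun f =>
    hdiff _ _ ((mkH_eq _ _).1 (mkH_surj (mkH f)).choose_spec)
  -- additivity
  have hadd : ∀ c₁ c₂ : H1 (Rep.of ρ), Φ (c₁ + c₂) = Φ c₁ + Φ c₂ := by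
    intro c₁ c₂
    obtain ⟨a, rfl⟩ := mkH_surj c₁
    obtain ⟨b, rfl⟩ := mkH_surj c₂
    rw [mkH_add, hΦmk, hΦmk, hΦmk]
    apply Subtype.ext
    show (Submodule.Quotient.mk (v (a + b) g₀) : A ⧸ J) =
      Submodule.Quotient.mk (v a g₀) + Submodule.Quotient.mk (v b g₀)
    rw [← Submodule.Quotient.mk_add]
    rfl
  -- injectivity
  have hinj : Function.Injective Φ := by
    intro c₁ c₂ hc
    obtain ⟨a, rfl⟩ := mkH_surj c₁
    obtain ⟨b, rfl⟩ := mkH_surj c₂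
    rw [hΦmk, hΦmk] at hc
    have hval : (Submodule.Quotient.mk (v a g₀) : A ⧸ J) = Submodule.Quotient.mk (v b g₀) :=
      congrArg Subtype.val hc
    rw [Submodule.Quotient.eq] at hval
    obtain ⟨y, hy⟩ := hval
    have hy' : R y - y = v (a - b) g₀ := hy
    rw [mkH_eq]
    refine ⟨y, funext fun g => ?_⟩
    rw [d₀₁_hom_apply]
    show ρ g y - y = v (a - b) g
    rw [hρg g]
    calc (R ^ e g) y - y = S (R y - y) (e g) := (hS_sub y (e g)).symm
      _ = S (v (a - b) g₀) (e g) := by rw [hy']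
      _ = v (a - b) (g₀ ^ e g) := (hcpow (a - b) (e g)).symm
      _ = v (a - b) g := by rw [he g]
  -- surjectivity
  have hsurj : Function.Surjective Φ := by
    rintro ⟨q, hq⟩
    obtain ⟨x, rfl⟩ := Submodule.Quotient.mk_surjective _ q
    obtain ⟨⟨m, hm⟩, hmq⟩ := (Submodule.mem_torsion_iff _).1 hq
    rw [Submonoid.mk_smul] at hmq
    have hmq' : m • (Submodule.Quotient.mk x : A ⧸ J) = 0 := hmq
    rw [hzmk, Submodule.Quotient.mk_eq_zero] at hmq'
    obtain ⟨y, hy⟩ := hmq'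
    have hNx : N x = 0 := by
      have h2 : N (m • x) = 0 := by
        rw [← hy, hRid, ← Module.End.mul_apply, hNR, LinearMap.zero_apply]
      rw [map_zsmul] at h2
      rcases hzfree m (N x) h2 with h | h
      · exact absurd h (nonZeroDivisors.ne_zero hm)
      · exact h
    set f : G → A := fun g => S x (e g) with hfdef
    have hf : f ∈ cocycles₁ (Rep.of ρ) := by
      rw [mem_cocycles₁_iff]
      intro g h
      have h1 : g₀ ^ e (g * h) = g₀ ^ (e g + e h) := by
        rw [he, pow_add, he, he]
      show S x (e (g * h)) = ρ g (S x (e h)) + S x (e g)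
      rw [hSkey x hNx _ _ h1, hS_add, hρg g]
      exact add_comm _ _
    refine ⟨mkH ⟨f, hf⟩, ?_⟩
    rw [hΦmk]
    apply Subtype.ext
    rw [hΨval]
    show (Submodule.Quotient.mk (S x (e g₀)) : A ⧸ J) = Submodule.Quotient.mk x
    have h1 : g₀ ^ e g₀ = g₀ ^ 1 := by rw [he, pow_one]
    rw [hSkey x hNx _ _ h1, hS_one]
  exact ⟨AddEquiv.mk' (Equiv.ofBijective Φ ⟨hinj, hsurj⟩) hadd⟩
end

section
/- Let Γ be a finitely generated group whose abelianization H₁(Γ) = Γ/[Γ,Γ] is infinite, and let s ≥ 2 be a natural number. On the set of group homomorphisms ρ : Γ → O(s) into the orthogonal group of ℝ^s, define ρ and ρ′ to be equivalent if there exist an automorphism f of Γ and a linear automorphism L of ℝ^s such that ρ′(f(γ)) = L ∘ ρ(γ) ∘ L⁻¹ for all γ ∈ Γ. Then the set of equivalence classes is uncountable. -/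
open Matrix Real
open scoped DirectSum

noncomputable section
namespace UncRep

/-- 2×2 rotation matrix. -/
def rot (t : ℝ) : Matrix (Fin 2) (Fin 2) ℝ :=
  !![Real.cos t, -Real.sin t; Real.sin t, Real.cos t]

lemma rot_mul (t u : ℝ) : rot t * rot u = rot (t + u) := by
  ext i j
  fin_cases i <;> fin_cases j <;>
    simp [rot, Matrix.mul_apply, Fin.sum_univ_succ, Real.cos_add, Real.sin_add] <;> ring

lemma rot_zero : rot 0 = 1 := by
  ext i j
  fin_cases i <;> fin_cases j <;> simp [rot, Matrix.one_apply]

lemma rot_transpose (t : ℝ) : (rot t)ᵀ = rot (-t) := by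
  ext i j
  fin_cases i <;> fin_cases j <;> simp [rot]

lemma trace_rot (t : ℝ) : (rot t).trace = 2 * Real.cos t := by
  simp [rot, Matrix.trace, Fin.sum_univ_succ]
  ring

/-- Rotation in the first two coordinates of `ℝ^(2+k)`. -/
def big (k : ℕ) (t : ℝ) : Matrix (Fin (2 + k)) (Fin (2 + k)) ℝ :=
  Matrix.reindexAlgEquiv ℝ ℝ finSumFinEquiv (Matrix.fromBlocks (rot t) 0 0 1)

lemma big_mul (k : ℕ) (t u : ℝ) : big k t * big k u = big k (t + u) := by
  unfold big
  rw [← _root_.map_mul]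
  congr 1
  rw [Matrix.fromBlocks_multiply]
  simp [rot_mul]

lemma big_zero (k : ℕ) : big k 0 = 1 := by
  unfold big
  rw [rot_zero, Matrix.fromBlocks_one, _root_.map_one]

lemma big_transpose (k : ℕ) (t : ℝ) : (big k t)ᵀ = big k (-t) := by
  unfold big
  rw [Matrix.reindexAlgEquiv_apply, Matrix.transpose_reindex, Matrix.fromBlocks_transpose,
    rot_transpose, Matrix.reindexAlgEquiv_apply]
  congr 1 <;> simp

lemma big_mem (k : ℕ) (t : ℝ) : big k t ∈ Matrix.orthogonalGroup (Fin (2 + k)) ℝ := by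
  rw [Matrix.mem_orthogonalGroup_iff]
  have : star (big k t) = (big k t)ᵀ := rfl
  rw [big_transpose, big_mul, add_neg_cancel, big_zero]

lemma trace_reindex' {n m : Type*} [Fintype n] [Fintype m] [DecidableEq n] [DecidableEq m]
    (e : n ≃ m) (M : Matrix n n ℝ) : (Matrix.reindex e e M).trace = M.trace := by
  simp only [Matrix.trace, Matrix.diag, Matrix.reindex_apply, Matrix.submatrix_apply]
  exact Fintype.sum_equiv e.symm _ _ (fun i => rfl)

lemma trace_fromBlocks' {n m : Type*} [Fintype n] [Fintype m]
    (A : Matrix n n ℝ) (B : Matrix n m ℝ) (C : Matrix m n ℝ) (D : Matrix m m ℝ) :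
    (Matrix.fromBlocks A B C D).trace = A.trace + D.trace := by
  simp [Matrix.trace, Matrix.diag, Fintype.sum_sum_type, Matrix.fromBlocks]

lemma trace_big (k : ℕ) (t : ℝ) : (big k t).trace = 2 * Real.cos t + k := by
  unfold big
  rw [Matrix.reindexAlgEquiv_apply, trace_reindex', trace_fromBlocks', trace_rot,
    Matrix.trace_one]
  simp


def bigU (k : ℕ) (t : ℝ) : Matrix.orthogonalGroup (Fin (2 + k)) ℝ := ⟨big k t, big_mem k t⟩

def rep {Γ : Type} [Group Γ] (k : ℕ) (χ : Γ → ℤ) (hχ : ∀ a b, χ (a * b) = χ a + χ b) (θ : ℝ) :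
    Γ →* Matrix.orthogonalGroup (Fin (2 + k)) ℝ where
  toFun γ := bigU k (θ * χ γ)
  map_one' := by
    have h1 : χ 1 = 0 := by have h := hχ 1 1; rw [one_mul] at h; omega
    apply Subtype.ext
    simp [bigU, h1, big_zero]
  map_mul' a b := by
    apply Subtype.ext
    have h : (θ * ((χ (a * b) : ℤ) : ℝ)) = θ * χ a + θ * χ b := by rw [hχ]; push_cast; ring
    simp [bigU, h, ← big_mul]

lemma trace_rep {Γ : Type} [Group Γ] (k : ℕ) (χ : Γ → ℤ) (hχ : ∀ a b, χ (a * b) = χ a + χ b)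
    (θ : ℝ) (γ : Γ) :
    ((rep k χ hχ θ γ : Matrix (Fin (2 + k)) (Fin (2 + k)) ℝ)).trace
      = 2 * Real.cos (θ * χ γ) + k :=
  trace_big k _

lemma exists_chi (Γ : Type) [Group Γ] [Group.FG Γ] (hab : Infinite (Abelianization Γ)) :
    ∃ (χ : Γ → ℤ) (γ₀ : Γ), (∀ a b, χ (a * b) = χ a + χ b) ∧ χ γ₀ = 1 := by
  classical
  have hsurj : Function.Surjective (Abelianization.of (G := Γ)) :=
    fun a => QuotientGroup.mk_surjective a
  haveI : Group.FG (Abelianization Γ) := Group.fg_of_surjective hsurj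
  obtain ⟨n, ι, fι, p, hp, e, ⟨F⟩⟩ :=
    AddCommGroup.equiv_free_prod_directSum_zmod (Additive (Abelianization Γ))
  have hn : n ≠ 0 := by
    rintro rfl
    haveI : Finite (⨁ i : ι, ZMod (p i ^ e i)) := by
      haveI : ∀ i : ι, NeZero (p i ^ e i) :=
        fun i => ⟨pow_ne_zero _ (hp i).pos.ne'⟩
      exact Finite.of_injective (fun f i => f i) DFunLike.coe_injective
    haveI : Finite (Fin 0 →₀ ℤ) := Finite.of_equiv _ Finsupp.equivFunOnFinite.symm
    haveI : Finite (Additive (Abelianization Γ)) := Finite.of_equiv _ F.toEquiv.symm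
    haveI : Infinite (Additive (Abelianization Γ)) :=
      Infinite.of_injective ⇑Additive.ofMul Additive.ofMul.injective
    exact not_finite (Additive (Abelianization Γ))
  have hn' : 0 < n := Nat.pos_of_ne_zero hn
  set i0 : Fin n := Fin.mk 0 hn' with hi0
  set ψ : Additive (Abelianization Γ) →+ ℤ :=
    (Finsupp.applyAddHom i0).comp ((AddMonoidHom.fst _ _).comp F.toAddMonoidHom) with hψdef
  set a₀ : Additive (Abelianization Γ) := F.symm (Finsupp.single i0 1, 0) with ha₀
  have hψa₀ : ψ a₀ = 1 := by
    simp [hψdef, ha₀]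
  obtain ⟨γ₀, hγ₀⟩ := hsurj (Additive.toMul a₀)
  refine ⟨fun γ => ψ (Additive.ofMul (Abelianization.of γ)), γ₀, ?_, ?_⟩
  · intro a b
    show ψ (Additive.ofMul (Abelianization.of (a * b))) = _
    rw [_root_.map_mul, ofMul_mul, _root_.map_add]
  · show ψ (Additive.ofMul (Abelianization.of γ₀)) = 1
    rw [hγ₀]
    simpa using hψa₀


lemma trace_conj {m : ℕ} (L : GL (Fin m) ℝ) (M : Matrix (Fin m) (Fin m) ℝ) :
    ((L : Matrix (Fin m) (Fin m) ℝ) * M *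
      ((L⁻¹ : GL (Fin m) ℝ) : Matrix (Fin m) (Fin m) ℝ)).trace = M.trace := by
  rw [Matrix.trace_mul_comm, ← mul_assoc, ← Units.val_mul, inv_mul_cancel, Units.val_one, one_mul]

/-- If a `Set ℝ`-valued invariant is constant on `r`-classes and the fibers of the induced
map from `ℝ` are countable, the quotient is uncountable. -/
lemma uncountable_quot {α : Type*} (r : α → α → Prop) (T : α → Set ℝ)
    (h : ∀ a b, r a b → T a = T b) (g : ℝ → α)
    (hfib : ∀ θ : ℝ, {θ' : ℝ | T (g θ') = T (g θ)}.Countable) :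
    Uncountable (Quot r) := by
  rw [← not_countable_iff]
  intro hc
  have huniv : (Set.univ : Set ℝ) ⊆ ⋃ b : Quot r, (fun θ => Quot.mk r (g θ)) ⁻¹' {b} :=
    fun θ _ => Set.mem_iUnion.2 ⟨Quot.mk r (g θ), rfl⟩
  refine Cardinal.not_countable_real (Set.Countable.mono huniv (Set.countable_iUnion fun b => ?_))
  rcases Set.eq_empty_or_nonempty ((fun θ => Quot.mk r (g θ)) ⁻¹' {b}) with hE | ⟨θ, hθ⟩
  · rw [hE]; exact Set.countable_empty
  · refine Set.Countable.mono ?_ (hfib θ)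
    intro θ' hθ'
    have hq : Quot.mk r (g θ') = Quot.mk r (g θ) := by
      have h1 : Quot.mk r (g θ') = b := hθ'
      have h2 : Quot.mk r (g θ) = b := hθ
      rw [h1, h2]
    exact congrArg (Quot.lift T h) hq

end UncRep

/-- For a finitely generated group `Γ` with infinite abelianization and `s ≥ 2`, the set of
orthogonal representations `ρ : Γ → O(s)`, modulo precomposition with automorphisms of `Γ` and
conjugation by linear automorphisms of `ℝ^s`, is uncountable. -/
theorem uncountable_classes_of_orthogonal_representations
    (Γ : Type) [Group Γ] [Group.FG Γ] (hab : Infinite (Abelianization Γ))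
    (s : ℕ) (hs : 2 ≤ s) :
    Uncountable (Quot (fun (ρ ρ' : Γ →* Matrix.orthogonalGroup (Fin s) ℝ) =>
      ∃ (f : Γ ≃* Γ) (L : GL (Fin s) ℝ), ∀ γ : Γ,
        (ρ' (f γ) : Matrix (Fin s) (Fin s) ℝ) =
          (L : Matrix (Fin s) (Fin s) ℝ) * (ρ γ : Matrix (Fin s) (Fin s) ℝ) *
            ((L⁻¹ : GL (Fin s) ℝ) : Matrix (Fin s) (Fin s) ℝ))) := by
  obtain ⟨k, rfl⟩ : ∃ k, s = 2 + k := ⟨s - 2, by omega⟩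
  obtain ⟨χ, γ₀, hχ, hγ₀⟩ := UncRep.exists_chi Γ hab
  set T : (Γ →* Matrix.orthogonalGroup (Fin (2 + k)) ℝ) → Set ℝ :=
    fun ρ => Set.range (fun γ : Γ => ((ρ γ : Matrix (Fin (2 + k)) (Fin (2 + k)) ℝ)).trace)
    with hTdef
  refine UncRep.uncountable_quot _ T ?_ (fun θ => UncRep.rep k χ hχ θ) ?_
  · rintro ρ ρ' ⟨f, L, hL⟩
    ext x
    simp only [hTdef, Set.mem_range]
    constructor
    · rintro ⟨γ, rfl⟩
      exact ⟨f γ, by rw [hL γ, UncRep.trace_conj]⟩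
    · rintro ⟨γ, rfl⟩
      refine ⟨f.symm γ, ?_⟩
      rw [← UncRep.trace_conj L ((ρ (f.symm γ) : Matrix (Fin (2 + k)) (Fin (2 + k)) ℝ)),
        ← hL (f.symm γ), f.apply_symm_apply]
  · intro θ
    have hsub : {θ' : ℝ | T (UncRep.rep k χ hχ θ') = T (UncRep.rep k χ hχ θ)} ⊆
        Set.range (fun x : ℤ × ℤ × Bool =>
          if x.2.2 then 2 * x.2.1 * Real.pi + θ * x.1 else 2 * x.2.1 * Real.pi - θ * x.1) := by
      intro θ' hθ'
      have hθ'' : T (UncRep.rep k χ hχ θ') = T (UncRep.rep k χ hχ θ) := hθ'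
      have hmem : (2 * Real.cos (θ' * χ γ₀) + k : ℝ) ∈ T (UncRep.rep k χ hχ θ) := by
        rw [← hθ'']
        exact ⟨γ₀, UncRep.trace_rep k χ hχ θ' γ₀⟩
      obtain ⟨γ, hγ⟩ := hmem
      simp only [UncRep.trace_rep] at hγ
      rw [hγ₀] at hγ
      have hcos : Real.cos (θ * χ γ) = Real.cos θ' := by
        simp only [Int.cast_one, mul_one] at hγ
        linarith
      obtain ⟨j, hj | hj⟩ := Real.cos_eq_cos_iff.mp hcos
      · exact ⟨(χ γ, j, true), by simp [hj]⟩
      · exact ⟨(χ γ, j, false), by simp [hj]⟩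
    exact Set.Countable.mono hsub (Set.countable_range _)
end
end
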